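/- arXiv:1710.11093 — 3 statements merged into one kernel-verified Lean document; each statement's English description precedes it below -/
import Mathlib

section
/- There exists a Parseval frame $\{\varphi_j\}_{j\in\mathbb{N}}$ of $\mathbb{R}$ (namely $\varphi_1=\varphi_2=\varphi_3=0$ and $\varphi_{j+3}=f_j$ where $f_j > 0$, $\sum_j f_j^2 = 1$, $\sum_j f_j = +\infty$) such that, with $D$ its analysis operator and $\Delta=\{1,2,3\}$ (so that $\mathcal{W}=\{0\}$), the operator $DD^*$ is unbounded from $\ell^\infty$ to $\ell^\infty$: $\sup_x \|DD^*x\|_\infty / \|x\|_\infty = +\infty$. -/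
/-!
Take `φ = (0, 0, 0, f 0, f 1, …)` with `f j = √6 / (π (j + 1))`. Then
`∑ φ j ^ 2 = (6 / π²) ζ(2) = 1`, which is exactly the Parseval identity `∑ |g φ j|² = |g|²`
on `ℝ`. Applying `D D^*` to the indicator of `{0, …, N - 1}` gives at index `3` the value
`φ 3 · ∑_{j < N} φ j`, which grows like the harmonic series, while the input has sup-norm `1`.
-/

open Filter Finset Real

section PadZeros

variable {G : Type*}

def padZeros [Zero G] (k : ℕ) (f : ℕ → G) (j : ℕ) : G :=
  if j < k then 0 else f (j - k)

variable [Zero G] {k : ℕ} {f : ℕ → G}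

theorem padZeros_of_lt {j : ℕ} (h : j < k) : padZeros k f j = 0 := if_pos h

@[simp]
theorem padZeros_add (j : ℕ) : padZeros k f (j + k) = f j := by
  simp [padZeros]

theorem padZeros_nonneg [Preorder G] (hf : ∀ j, 0 ≤ f j) (j : ℕ) : 0 ≤ padZeros k f j := by
  unfold padZeros
  split_ifs
  exacts [le_rfl, hf _]

theorem comp_padZeros {H : Type*} [Zero H] {g : G → H} (hg : g 0 = 0) :
    (fun j => g (padZeros k f j)) = padZeros k fun j => g (f j) := by
  ext j
  by_cases h : j < k <;> simp [padZeros, h, hg]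

end PadZeros

section PadZerosTopology

variable {G : Type*} [AddCommGroup G] [TopologicalSpace G] [IsTopologicalAddGroup G]
  {k : ℕ} {f : ℕ → G}

theorem summable_padZeros_iff : Summable (padZeros k f) ↔ Summable f := by
  simpa using (summable_nat_add_iff k (f := padZeros k f)).symm

theorem hasSum_padZeros_iff {a : G} : HasSum (padZeros k f) a ↔ HasSum f a := by
  have hzero : ∑ j ∈ range k, padZeros k f j = 0 :=
    sum_eq_zero fun j hj => padZeros_of_lt (mem_range.mp hj)
  simpa [hzero] using (hasSum_nat_add_iff k (f := padZeros k f) (g := a)).symm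

end PadZerosTopology

theorem tsum_norm_mul_sq {ι 𝕜 : Type*} [NormedDivisionRing 𝕜] (g : 𝕜) (φ : ι → 𝕜) :
    ∑' j, ‖g * φ j‖ ^ 2 = ‖g‖ ^ 2 * ∑' j, ‖φ j‖ ^ 2 := by
  simp_rw [norm_mul, mul_pow]
  exact tsum_mul_left

theorem Finsupp.indicator_one_sum_mul {ι R : Type*} [Semiring R] (s : Finset ι) (φ : ι → R) :
    ((Finsupp.indicator s fun _ _ => (1 : R)).sum fun j v => v * φ j) = ∑ j ∈ s, φ j := by
  classical
  rw [Finsupp.sum_of_support_subset _ (Finsupp.support_indicator_subset _ _) _ (by simp)]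
  exact Finset.sum_congr rfl fun j hj => by rw [Finsupp.indicator_of_mem hj, one_mul]

theorem exists_abs_le_one_lt_abs_mul_sum_of_not_summable {φ : ℕ → ℝ} (hφ : ∀ j, 0 ≤ φ j)
    (hφs : ¬ Summable φ) {i : ℕ} (hi : φ i ≠ 0) (C : ℝ) :
    ∃ x : ℕ →₀ ℝ, (∀ j, |x j| ≤ 1) ∧ C < |φ i * (x.sum fun j v => v * φ j)| := by
  classical
  have hpartial : Tendsto (fun N => |φ i| * ∑ j ∈ range N, φ j) atTop atTop :=
    ((not_summable_iff_tendsto_nat_atTop_of_nonneg hφ).mp hφs).const_mul_atTop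
      (abs_pos.mpr hi)
  obtain ⟨N, hN⟩ := (hpartial.eventually_gt_atTop C).exists
  refine ⟨Finsupp.indicator (range N) fun _ _ => 1, fun j => ?_, ?_⟩
  · rw [Finsupp.indicator_apply]
    split_ifs <;> norm_num
  · rwa [Finsupp.indicator_one_sum_mul, abs_mul,
      abs_of_nonneg (sum_nonneg fun j _ => hφ j)]

-- `√6 / π = ζ(2) ^ (-1/2)` normalizes `1 / (j + 1)` in `ℓ²`.
noncomputable def harmonicUnit (j : ℕ) : ℝ := √6 / (π * (j + 1))

theorem harmonicUnit_pos (j : ℕ) : 0 < harmonicUnit j := by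
  unfold harmonicUnit; positivity

theorem hasSum_harmonicUnit_sq : HasSum (fun j => harmonicUnit j ^ 2) 1 := by
  have hzeta : HasSum (fun n : ℕ => 1 / ((n : ℝ) + 1) ^ 2) (π ^ 2 / 6) := by
    simpa using (hasSum_nat_add_iff' 1).mpr hasSum_zeta_two
  have hπ : π ≠ 0 := pi_pos.ne'
  have hsq :
      (fun j => harmonicUnit j ^ 2) = fun j : ℕ => 6 / π ^ 2 * (1 / ((j : ℝ) + 1) ^ 2) := by
    ext j
    rw [harmonicUnit, div_pow, mul_pow, sq_sqrt (by norm_num)]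
    field_simp
  have hscaled := hzeta.mul_left (6 / π ^ 2)
  rwa [show 6 / π ^ 2 * (π ^ 2 / 6) = (1 : ℝ) by field_simp, ← hsq] at hscaled

theorem not_summable_harmonicUnit : ¬ Summable harmonicUnit := by
  intro h
  have : Summable fun n : ℕ => 1 / ((n + 1 : ℕ) : ℝ) := by
    refine (h.mul_left (π / √6)).congr fun j => ?_
    rw [harmonicUnit]
    push_cast
    field_simp
  exact Real.not_summable_one_div_natCast ((summable_nat_add_iff 1).mp this)

/-- There is a Parseval frame `{φ j}` of `ℝ` (with `φ 0 = φ 1 = φ 2 = 0` and `φ (j+3) = f j`,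
`f j > 0`, `∑ f j ^ 2 = 1`, `∑ f j = ∞`) whose synthesis-analysis operator `D D^*`,
`(D D^* x) i = φ i * ∑ j, x j * φ j`, is unbounded from `ℓ^∞` to `ℓ^∞`. -/
theorem exists_parseval_frame_DDstar_unbounded :
    ∃ φ : ℕ → ℝ,
      (φ 0 = 0 ∧ φ 1 = 0 ∧ φ 2 = 0) ∧
      (∀ j, 3 ≤ j → 0 < φ j) ∧
      (∑' j : ℕ, φ j ^ 2 = 1) ∧
      ¬ Summable φ ∧
      -- Parseval frame property of `{φ j}` for the Hilbert space `ℝ`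
      (∀ g : ℝ, ∑' j : ℕ, ‖g * φ j‖ ^ 2 = ‖g‖ ^ 2) ∧
      -- `D D^*` is unbounded from `ℓ^∞` to `ℓ^∞`: on finitely supported inputs of
      -- sup-norm at most 1 its output sup-norm is arbitrarily large
      (∀ C : ℝ, ∃ x : ℕ →₀ ℝ, (∀ j, |x j| ≤ 1) ∧
        ∃ i : ℕ, C < |φ i * (x.sum fun j v => v * φ j)|) := by
  set φ := padZeros 3 harmonicUnit
  have hpos : ∀ j, 3 ≤ j → 0 < φ j := fun j hj => by
    obtain ⟨j, rfl⟩ := Nat.exists_eq_add_of_le' hj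
    exact (padZeros_add j).trans_gt (harmonicUnit_pos j)
  have hsq : ∑' j, φ j ^ 2 = 1 := by
    rw [comp_padZeros (g := fun t : ℝ => t ^ 2) (by norm_num)]
    exact (hasSum_padZeros_iff.mpr hasSum_harmonicUnit_sq).tsum_eq
  have hnot : ¬ Summable φ := summable_padZeros_iff.not.mpr not_summable_harmonicUnit
  refine ⟨φ, ⟨padZeros_of_lt (by norm_num), padZeros_of_lt (by norm_num),
    padZeros_of_lt (by norm_num)⟩, hpos, hsq, hnot, fun g => ?_, fun C => ?_⟩
  · simp_rw [tsum_norm_mul_sq, Real.norm_eq_abs, sq_abs, hsq, mul_one]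
  · obtain ⟨x, hx, hC⟩ := exists_abs_le_one_lt_abs_mul_sum_of_not_summable
      (padZeros_nonneg fun j => (harmonicUnit_pos j).le) hnot (hpos 3 le_rfl).ne' C
    exact ⟨x, hx, 3, hC⟩
end

section
/- Let $m, N, s_1,\dots,s_N \in \mathbb{N}$ with $m \le N$, and let $\upsilon \ge 2m^2$. Let $(n'_1,\dots,n'_N)$ follow the multivariate hypergeometric distribution arising from drawing $m$ elements without replacement from a population with $\upsilon s_l$ copies of element $l$, and let $(n_1,\dots,n_N)$ follow the multinomial distribution with $m$ trials and probabilities $p_l = s_l/(s_1+\dots+s_N)$. Then for every $k_1,\dots,k_N \in \mathbb{N}\cup\{0\}$ with $k_1+\dots+k_N = m$, $\mathbb{P}(n'_1=k_1,\dots,n'_N=k_N) \ge \tfrac{1}{2}\,\mathbb{P}(n_1=k_1,\dots,n_N=k_N)$. -/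
/-!
Writing the binomial coefficients as falling factorials, both sides share the factor
`m! / ∏ k_l!`, and it remains to compare `∏ (υ s_l)_{k_l} / (υ S)_m` with `∏ s_l ^ k_l / S ^ m`,
where `S = ∑ s_l`. Each factor of `(υ s_l)_{k_l}` is at least `υ s_l - m ≥ (υ - m) s_l`, and
`(υ S)_m ≤ (υ S)^m`, so the ratio of the two is at least `(1 - m/υ)^m ≥ 1 - m²/υ ≥ 1/2`
by Bernoulli's inequality.
-/

open Finset
open scoped Nat

theorem Nat.pow_le_two_mul_sub_pow {m υ : ℕ} (h : 2 * m ^ 2 ≤ υ) :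
    υ ^ m ≤ 2 * (υ - m) ^ m := by
  rcases Nat.eq_zero_or_pos υ with rfl | hυ
  · simp_all
  have hmυ : m ≤ υ := by nlinarith
  have hυ' : (0 : ℝ) < υ := by exact_mod_cast hυ
  set x : ℝ := m / υ
  have hx : x ≤ 1 := (div_le_one hυ').2 (by exact_mod_cast hmυ)
  have hmx : m * x ≤ 1 / 2 := by
    rw [← mul_div_assoc, div_le_iff₀ hυ']
    have : (2 * m ^ 2 : ℝ) ≤ υ := by exact_mod_cast h
    linarith
  have bernoulli : 1 - m * x ≤ (1 - x) ^ m := by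
    simpa [sub_eq_add_neg] using one_add_mul_le_pow (a := -x) (by linarith) m
  have hscale : ((υ - m : ℕ) : ℝ) ^ m = (υ : ℝ) ^ m * (1 - x) ^ m := by
    rw [← mul_pow, Nat.cast_sub hmυ, mul_one_sub, mul_div_cancel₀ _ hυ'.ne']
  have : (υ : ℝ) ^ m ≤ 2 * ((υ - m : ℕ) : ℝ) ^ m := by
    rw [hscale]
    nlinarith [pow_pos hυ' m]
  exact_mod_cast this

theorem Nat.sub_mul_pow_le_descFactorial {m k : ℕ} (hk : k ≤ m) (υ s : ℕ) :
    ((υ - m) * s) ^ k ≤ (υ * s).descFactorial k := by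
  refine le_trans (Nat.pow_le_pow_left ?_ k) (Nat.pow_sub_le_descFactorial _ _)
  rcases Nat.eq_zero_or_pos s with rfl | hs
  · simp
  have := Nat.le_mul_of_pos_right m hs
  rw [Nat.sub_mul]
  omega

theorem Nat.cast_choose_eq_descFactorial_div_factorial {K : Type*} [DivisionSemiring K]
    [CharZero K] (n k : ℕ) : (n.choose k : K) = n.descFactorial k / k ! := by
  rw [Nat.choose_eq_descFactorial_div_factorial,
    Nat.cast_div (Nat.factorial_dvd_descFactorial n k) (by exact_mod_cast k.factorial_ne_zero)]

section

variable {ι : Type*} [Fintype ι]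

theorem sub_pow_mul_prod_pow_le_prod_descFactorial {m : ℕ} {k : ι → ℕ} (hk : ∑ l, k l = m)
    (υ : ℕ) (s : ι → ℕ) :
    (υ - m) ^ m * ∏ l, s l ^ k l ≤ ∏ l, (υ * s l).descFactorial (k l) := by
  have hkm (l : ι) : k l ≤ m := hk ▸ single_le_sum (fun _ _ ↦ Nat.zero_le _) (mem_univ l)
  calc (υ - m) ^ m * ∏ l, s l ^ k l = ∏ l, ((υ - m) * s l) ^ k l := by
        simp_rw [mul_pow, prod_mul_distrib, prod_pow_eq_pow_sum, hk]
    _ ≤ ∏ l, (υ * s l).descFactorial (k l) :=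
        prod_le_prod' fun l _ ↦ Nat.sub_mul_pow_le_descFactorial (hkm l) υ (s l)

theorem prod_pow_mul_descFactorial_le {m : ℕ} {k : ι → ℕ} (hk : ∑ l, k l = m) {υ : ℕ}
    (hυ : 2 * m ^ 2 ≤ υ) (s : ι → ℕ) :
    (∏ l, s l ^ k l) * (υ * ∑ l, s l).descFactorial m
      ≤ 2 * (∑ l, s l) ^ m * ∏ l, (υ * s l).descFactorial (k l) := by
  set S := ∑ l, s l
  calc (∏ l, s l ^ k l) * (υ * S).descFactorial m
      ≤ (∏ l, s l ^ k l) * (υ ^ m * S ^ m) := by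
        rw [← mul_pow]; exact Nat.mul_le_mul_left _ (Nat.descFactorial_le_pow _ _)
    _ ≤ (∏ l, s l ^ k l) * (2 * (υ - m) ^ m * S ^ m) := by
        gcongr; exact Nat.pow_le_two_mul_sub_pow hυ
    _ = 2 * S ^ m * ((υ - m) ^ m * ∏ l, s l ^ k l) := by ring
    _ ≤ 2 * S ^ m * ∏ l, (υ * s l).descFactorial (k l) := by
        gcongr; exact sub_pow_mul_prod_pow_le_prod_descFactorial hk υ s

theorem prod_div_sum_pow_div_factorial (s k : ι → ℕ) :
    ∏ l, ((s l : ℝ) / ∑ i, (s i : ℝ)) ^ k l / (k l)!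
      = (∏ l, (s l : ℝ) ^ k l) / (∑ l, (s l : ℝ)) ^ (∑ l, k l) / ∏ l, ((k l)! : ℝ) := by
  simp_rw [div_pow, prod_div_distrib, prod_pow_eq_pow_sum]

theorem prod_choose_div_choose (υ m : ℕ) (s k : ι → ℕ) :
    (∏ l, ((υ * s l).choose (k l) : ℝ)) / ((υ * ∑ l, s l).choose m : ℝ)
      = (m ! / ∏ l, ((k l)! : ℝ)) *
        ((∏ l, ((υ * s l).descFactorial (k l) : ℝ)) / ((υ * ∑ l, s l).descFactorial m : ℝ)) := by
  simp_rw [Nat.cast_choose_eq_descFactorial_div_factorial, prod_div_distrib, div_div_eq_mul_div]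
  ring

theorem half_prod_pow_div_pow_le_prod_descFactorial_div {m : ℕ} {k : ι → ℕ} (hk : ∑ l, k l = m)
    {υ : ℕ} (hυ : 2 * m ^ 2 ≤ υ) (s : ι → ℕ) :
    (∏ l, (s l : ℝ) ^ k l) / (∑ l, (s l : ℝ)) ^ m / 2
      ≤ (∏ l, ((υ * s l).descFactorial (k l) : ℝ)) / ((υ * ∑ l, s l).descFactorial m : ℝ) := by
  set S := ∑ l, s l
  have hS : (∑ l, (s l : ℝ)) = S := (Nat.cast_sum _ _).symm
  rw [hS]
  rcases eq_or_ne (S ^ m) 0 with hSm | hSm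
  · rw [show (S : ℝ) ^ m = 0 by exact_mod_cast hSm, div_zero, zero_div]
    positivity
  have hmS : m ≤ υ * S := by
    rcases Nat.eq_zero_or_pos m with rfl | hm
    · exact Nat.zero_le _
    have : 1 ≤ S := Nat.one_le_iff_ne_zero.2 ((pow_ne_zero_iff hm.ne').1 hSm)
    nlinarith
  have hD : (0 : ℝ) < (υ * S).descFactorial m := by exact_mod_cast Nat.descFactorial_pos.2 hmS
  have hSpos : (0 : ℝ) < (S : ℝ) ^ m := by exact_mod_cast Nat.pos_of_ne_zero hSm
  rw [div_div, div_le_div_iff₀ (by positivity) hD]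
  have key : ((∏ l, s l ^ k l) * (υ * S).descFactorial m : ℕ)
      ≤ (2 * S ^ m * ∏ l, (υ * s l).descFactorial (k l) : ℕ) :=
    prod_pow_mul_descFactorial_le hk hυ s
  rify at key
  linarith

end

theorem hypergeometric_ge_half_multinomial_general
    (N m υ : ℕ) (s : Fin N → ℕ)
    (hυ : 2 * m ^ 2 ≤ υ)
    (k : Fin N → ℕ) (hk : ∑ l : Fin N, k l = m) :
    ((1 : ℝ) / 2) *
        ((m.factorial : ℝ) * ∏ l : Fin N,
          ((s l : ℝ) / (∑ i : Fin N, (s i : ℝ))) ^ k l / (k l).factorial)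
      ≤ (∏ l : Fin N, ((υ * s l).choose (k l) : ℝ)) /
          ((υ * ∑ l : Fin N, s l).choose m : ℝ) := by
  rw [prod_div_sum_pow_div_factorial, prod_choose_div_choose, hk]
  calc 1 / 2 * (m ! * ((∏ l, (s l : ℝ) ^ k l) / (∑ l, (s l : ℝ)) ^ m / ∏ l, ((k l)! : ℝ)))
      = (m ! / ∏ l, ((k l)! : ℝ)) * ((∏ l, (s l : ℝ) ^ k l) / (∑ l, (s l : ℝ)) ^ m / 2) := by
        ring
    _ ≤ _ := mul_le_mul_of_nonneg_left
        (half_prod_pow_div_pow_le_prod_descFactorial_div hk hυ s) (by positivity)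

/-- Comparison of sampling without replacement (multivariate hypergeometric) and
with replacement (multinomial): if `υ ≥ 2m²`, then for every `k` with `∑ k = m`,
the hypergeometric probability is at least half of the multinomial probability. -/
theorem hypergeometric_ge_half_multinomial
    (N m υ : ℕ) (hmN : m ≤ N) (s : Fin N → ℕ) (hs : ∀ l, 0 < s l)
    (hυ : 2 * m ^ 2 ≤ υ)
    (k : Fin N → ℕ) (hk : ∑ l : Fin N, k l = m) :
    ((1 : ℝ) / 2) *
        ((m.factorial : ℝ) * ∏ l : Fin N,
          ((s l : ℝ) / (∑ i : Fin N, (s i : ℝ))) ^ k l / (k l).factorial)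
      ≤ (∏ l : Fin N, ((υ * s l).choose (k l) : ℝ)) /
          ((υ * ∑ l : Fin N, s l).choose m : ℝ) :=
  hypergeometric_ge_half_multinomial_general N m υ s hυ k hk
end

section
/- Let $\mathcal{H}$ be a Hilbert space, $D\colon\mathcal{H}\to\ell^2(J)$ the analysis operator of a frame with $\|D\|, \|D^{-1}\| \le \sqrt{\kappa_2}$, $\Delta \subseteq J$ finite, and $\mathcal{W} = R(D^*P_\Delta) + R(D^{-1}P_\Delta)$ with orthogonal projection $P_\mathcal{W}$. Then for every $g\in\mathcal{H}$, $\|g\|_{\mathcal{H}} \le \|P_\mathcal{W} g\|_{\mathcal{H}} + \sqrt{\kappa_2}\, \|P_\Delta^\perp D g\|_{\ell^1(J)}$, where we use the identity $P_\mathcal{W}^\perp g = P_\mathcal{W}^\perp D^{-1} P_\Delta^\perp D g$ (valid since $D^{-1}D = I$ and $R(D^{-1}P_\Delta)\subseteq\mathcal{W}$). -/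
/-!
Split `D g` into its head `∑_{j ∈ Δ} D g j · e_j` and its tail. Since `D⁻¹ D = I`, `g` differs
from `D⁻¹(tail)` by `D⁻¹(head) ∈ W`, so the distance from `g` to `W` is at most
`‖D⁻¹(tail)‖ ≤ ‖D⁻¹‖ ‖tail‖_{ℓ²} ≤ √κ₂ ‖tail‖_{ℓ¹}`.
-/

open scoped ENNReal

namespace lp

variable {α : Type*} {E : α → Type*} [∀ i, NormedAddCommGroup (E i)] {p : ℝ≥0∞}

theorem enorm_le_tsum_enorm [Fact (1 ≤ p)] (hp : p ≠ ⊤) (f : lp E p) :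
    ‖f‖ₑ ≤ ∑' i, ‖f i‖ₑ := by
  classical
  have hp₀ : 0 < p := zero_lt_one.trans_le Fact.out
  calc ‖f‖ₑ = ‖∑' i, lp.single p i (f i)‖ₑ := by rw [(lp.hasSum_single hp f).tsum_eq]
    _ ≤ ∑' i, ‖lp.single p i (f i)‖ₑ := enorm_tsum_le_tsum_enorm
    _ = ∑' i, ‖f i‖ₑ := by simp only [← ofReal_norm, lp.norm_single hp₀]

theorem sum_single_apply [DecidableEq α] (f : ∀ i, E i) (s : Finset α) (j : α) :
    (∑ i ∈ s, lp.single p i (f i)) j = if j ∈ s then f j else 0 := by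
  simp only [lp.coeFn_sum, lp.coeFn_single, Finset.sum_apply, Finset.sum_pi_single]

theorem sub_sum_single_apply [DecidableEq α] (f : lp E p) (s : Finset α) (j : α) :
    (f - ∑ i ∈ s, lp.single p i (f i)) j = if j ∈ s then 0 else f j := by
  rw [lp.coeFn_sub, Pi.sub_apply, sum_single_apply]
  split_ifs <;> simp

theorem enorm_sub_sum_single_le [DecidableEq α] [Fact (1 ≤ p)] (hp : p ≠ ⊤) (f : lp E p)
    (s : Finset α) :
    ‖f - ∑ i ∈ s, lp.single p i (f i)‖ₑ ≤ ∑' j : {j // j ∉ s}, ‖f j‖ₑ := by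
  refine (enorm_le_tsum_enorm hp _).trans_eq ?_
  rw [← tsum_subtype_eq_of_support_subset (s := {j | j ∉ s})]
  · exact tsum_congr fun j => by rw [sub_sum_single_apply, if_neg j.2]
  · intro j hj
    by_contra hjs
    simp_all [sub_sum_single_apply]

end lp

theorem Submodule.norm_le_norm_orthogonalProjectionOnto_add {𝕜 E : Type*} [RCLike 𝕜]
    [NormedAddCommGroup E] [InnerProductSpace 𝕜 E] (K : Submodule 𝕜 E)
    [K.HasOrthogonalProjection] {g v : E} (hgv : g - v ∈ K) :
    ‖g‖ ≤ ‖(K.orthogonalProjectionOnto g : E)‖ + ‖v‖ := by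
  have hdist : ‖g - K.orthogonalProjectionOnto g‖ ≤ ‖v‖ := by
    rw [← Submodule.starProjection_apply, K.starProjection_minimal]
    simpa using ciInf_le ⟨0, Set.forall_mem_range.mpr fun w : K => norm_nonneg (g - w)⟩
      (⟨g - v, hgv⟩ : K)
  calc ‖g‖ ≤ ‖(K.orthogonalProjectionOnto g : E)‖ + ‖g - K.orthogonalProjectionOnto g‖ :=
          norm_le_insert' _ _
    _ ≤ _ := by gcongr

theorem norm_le_proj_add_tail_general
    {H : Type*} [NormedAddCommGroup H] [InnerProductSpace ℂ H] [CompleteSpace H]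
    {J : Type*} (κ₂ : ℝ)
    (D : H →L[ℂ] lp (fun _ : J => ℂ) 2)
    (Dinv : lp (fun _ : J => ℂ) 2 →L[ℂ] H)
    (hleft : Dinv.comp D = ContinuousLinearMap.id ℂ H)
    (hDinv : ‖Dinv‖ ≤ Real.sqrt κ₂)
    (Δ : Finset J) (W : Submodule ℂ H) [CompleteSpace W]
    (hW : W = Submodule.span ℂ
      {y : H | ∃ x : lp (fun _ : J => ℂ) 2, (∀ j ∉ Δ, x j = 0) ∧
        (y = ContinuousLinearMap.adjoint D x ∨ y = Dinv x)}) :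
    ∀ g : H,
      ENNReal.ofReal ‖g‖ ≤
        ENNReal.ofReal ‖(W.orthogonalProjectionOnto g : H)‖ +
          ENNReal.ofReal (Real.sqrt κ₂) *
            ∑' j : {j : J // j ∉ Δ}, ENNReal.ofReal ‖D g j.1‖ := by
  intro g
  classical
  set head := ∑ j ∈ Δ, lp.single 2 j (D g j)
  have hhead : Dinv head ∈ W := hW ▸ Submodule.subset_span
    ⟨head, fun j hj => by rw [lp.sum_single_apply, if_neg hj], Or.inr rfl⟩
  have hsplit : g - Dinv (D g - head) ∈ W := by
    rwa [map_sub, ← ContinuousLinearMap.comp_apply, hleft, ContinuousLinearMap.id_apply,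
      sub_sub_cancel]
  simp only [ofReal_norm]
  calc ‖g‖ₑ ≤ ‖(W.orthogonalProjectionOnto g : H)‖ₑ + ‖Dinv (D g - head)‖ₑ := by
        simpa only [← ofReal_norm, ← ENNReal.ofReal_add (norm_nonneg _) (norm_nonneg _)] using
          ENNReal.ofReal_le_ofReal (W.norm_le_norm_orthogonalProjectionOnto_add hsplit)
    _ ≤ ‖(W.orthogonalProjectionOnto g : H)‖ₑ + ‖Dinv‖ₑ * ‖D g - head‖ₑ := by
        gcongr; exact Dinv.le_opENorm _
    _ ≤ _ := by
        gcongr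
        · rw [← ofReal_norm]; exact ENNReal.ofReal_le_ofReal hDinv
        · exact lp.enorm_sub_sum_single_le ENNReal.ofNat_ne_top _ _

/-- Splitting estimate: with `D` the analysis operator of a frame, `D⁻¹` a left inverse,
`‖D‖, ‖D⁻¹‖ ≤ √κ₂`, `Δ ⊆ J` finite and `W = R(D^* P_Δ) + R(D⁻¹ P_Δ)`, every `g ∈ H`
satisfies `‖g‖ ≤ ‖P_W g‖ + √κ₂ ‖P_Δ^⊥ D g‖₁` (the `ℓ¹` norm possibly infinite). -/
theorem norm_le_proj_add_tail
    {H : Type*} [NormedAddCommGroup H] [InnerProductSpace ℂ H] [CompleteSpace H]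
    {J : Type*} (κ₂ : ℝ) (hκ₂ : 1 ≤ κ₂)
    (D : H →L[ℂ] lp (fun _ : J => ℂ) 2)
    (Dinv : lp (fun _ : J => ℂ) 2 →L[ℂ] H)
    (hleft : Dinv.comp D = ContinuousLinearMap.id ℂ H)
    (hD : ‖D‖ ≤ Real.sqrt κ₂) (hDinv : ‖Dinv‖ ≤ Real.sqrt κ₂)
    (Δ : Finset J) (W : Submodule ℂ H) [CompleteSpace W]
    (hW : W = Submodule.span ℂ
      {y : H | ∃ x : lp (fun _ : J => ℂ) 2, (∀ j ∉ Δ, x j = 0) ∧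
        (y = ContinuousLinearMap.adjoint D x ∨ y = Dinv x)}) :
    ∀ g : H,
      ENNReal.ofReal ‖g‖ ≤
        ENNReal.ofReal ‖(W.orthogonalProjectionOnto g : H)‖ +
          ENNReal.ofReal (Real.sqrt κ₂) *
            ∑' j : {j : J // j ∉ Δ}, ENNReal.ofReal ‖D g j.1‖ :=
  norm_le_proj_add_tail_general κ₂ D Dinv hleft hDinv Δ W hW
end
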